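/- arXiv:1509.03606 — 2 statements merged into one kernel-verified Lean document; each statement's English description precedes it below -/
import Mathlib

section
/- Suppose R > 0, ε ≥ 0 and β ∈ ℂ. Let w, ψ : ℝ² → ℂ be smooth functions with w = 0 on ∂Ω, satisfying on Ω the equation (1/R)·Δw + R·ψ_θ = β·(w − ε·Δw). Then the integral identity (1/R + β·ε)·‖Δw‖² + R·⟨ψ_θ, Δw⟩ = −β·‖∇w‖² holds. -/
open MeasureTheory Complex

noncomputable section

/-- Partial derivative with respect to the first (x) variable. -/
def pdx (f : ℝ × ℝ → ℂ) : ℝ × ℝ → ℂ := fun p => deriv (fun x => f (x, p.2)) p.1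

/-- Partial derivative with respect to the second (y) variable. -/
def pdy (f : ℝ × ℝ → ℂ) : ℝ × ℝ → ℂ := fun p => deriv (fun y => f (p.1, y)) p.2

/-- The Laplacian Δf = f_xx + f_yy. -/
def lap (f : ℝ × ℝ → ℂ) : ℝ × ℝ → ℂ := fun p => pdx (pdx f) p + pdy (pdy f) p

/-- The azimuthal derivative f_θ = x f_y − y f_x. -/
def azim (f : ℝ × ℝ → ℂ) : ℝ × ℝ → ℂ :=
  fun p => (p.1 : ℂ) * pdy f p - (p.2 : ℂ) * pdx f p

/-- The open unit disk Ω. -/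
def disk : Set (ℝ × ℝ) := {p | p.1 ^ 2 + p.2 ^ 2 < 1}

/-- The unit circle ∂Ω. -/
def bdry : Set (ℝ × ℝ) := {p | p.1 ^ 2 + p.2 ^ 2 = 1}

/-- The L² inner product ⟨f,g⟩ = ∫_Ω f ⬝ conj g dA. -/
def ip (f g : ℝ × ℝ → ℂ) : ℂ := ∫ p in disk, f p * (starRingEnd ℂ) (g p)

/-- The squared L² norm ‖f‖² over Ω. -/
def nsq (f : ℝ × ℝ → ℂ) : ℝ := ∫ p in disk, ‖f p‖ ^ 2

/-- The squared L² norm of the gradient: ‖∇f‖² = ‖f_x‖² + ‖f_y‖². -/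
def gradNsq (f : ℝ × ℝ → ℂ) : ℝ := nsq (pdx f) + nsq (pdy f)

/-! Multiplying the equation by `conj Δw` and integrating over `Ω` gives the identity up to the
term `β ∫ w · conj Δw`, which Green's identity turns into `-β ‖∇w‖²` because `w = 0` on `∂Ω`.
Green's identity is the divergence theorem for the field `w · conj ∇w`, whose normal component
vanishes on `∂Ω`. In polar coordinates the divergence theorem on the disk reduces to the
fundamental theorem of calculus on the rectangle `(0, 1) × (-π, π)`: the radial boundary terms
vanish by the boundary condition at `r = 1` and by the factor `r` at `r = 0`, the angular ones by
periodicity. -/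

open Set ComplexConjugate
open scoped Real

section PartialDerivatives

variable {f g : ℝ × ℝ → ℂ} {p : ℝ × ℝ}

theorem hasDerivAt_pdx (hf : DifferentiableAt ℝ f p) :
    HasDerivAt (fun x => f (x, p.2)) (pdx f p) p.1 :=
  (hf.comp p.1 (differentiableAt_id.prodMk (differentiableAt_const _))).hasDerivAt

theorem hasDerivAt_pdy (hf : DifferentiableAt ℝ f p) :
    HasDerivAt (fun y => f (p.1, y)) (pdy f p) p.2 :=
  (hf.comp p.2 ((differentiableAt_const _).prodMk differentiableAt_id)).hasDerivAt

theorem pdx_eq_fderiv (hf : DifferentiableAt ℝ f p) : pdx f p = fderiv ℝ f p (1, 0) :=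
  (hf.hasFDerivAt.comp_hasDerivAt p.1 ((hasDerivAt_id _).prodMk (hasDerivAt_const _ _))).deriv

theorem pdy_eq_fderiv (hf : DifferentiableAt ℝ f p) : pdy f p = fderiv ℝ f p (0, 1) :=
  (hf.hasFDerivAt.comp_hasDerivAt p.2 ((hasDerivAt_const _ _).prodMk (hasDerivAt_id _))).deriv

theorem hasDerivAt_comp_curve {γ : ℝ → ℝ × ℝ} {a b t : ℝ}
    (hγ : HasDerivAt γ (a, b) t) (hf : DifferentiableAt ℝ f (γ t)) :
    HasDerivAt (fun s => f (γ s)) (a * pdx f (γ t) + b * pdy f (γ t)) t := by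
  refine (hf.hasFDerivAt.comp_hasDerivAt t hγ).congr_deriv ?_
  have hab : ((a, b) : ℝ × ℝ) = a • ((1 : ℝ), (0 : ℝ)) + b • ((0 : ℝ), (1 : ℝ)) := by simp
  rw [hab, map_add, map_smul, map_smul, pdx_eq_fderiv hf, pdy_eq_fderiv hf, Complex.real_smul,
    Complex.real_smul]

variable {m n : WithTop ℕ∞}

theorem contDiff_pdx (hf : ContDiff ℝ n f) (hmn : m + 1 ≤ n) : ContDiff ℝ m (pdx f) := by
  have hd : Differentiable ℝ f := (hf.of_le (le_add_self.trans hmn)).differentiable one_ne_zero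
  rw [show pdx f = fun p => fderiv ℝ f p (1, 0) from funext fun p => pdx_eq_fderiv (hd p)]
  exact (hf.fderiv_right hmn).clm_apply contDiff_const

theorem contDiff_pdy (hf : ContDiff ℝ n f) (hmn : m + 1 ≤ n) : ContDiff ℝ m (pdy f) := by
  have hd : Differentiable ℝ f := (hf.of_le (le_add_self.trans hmn)).differentiable one_ne_zero
  rw [show pdy f = fun p => fderiv ℝ f p (0, 1) from funext fun p => pdy_eq_fderiv (hd p)]
  exact (hf.fderiv_right hmn).clm_apply contDiff_const

theorem continuous_pdx (hf : ContDiff ℝ 1 f) : Continuous (pdx f) :=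
  (contDiff_pdx (m := 0) hf (by norm_num)).continuous

theorem continuous_pdy (hf : ContDiff ℝ 1 f) : Continuous (pdy f) :=
  (contDiff_pdy (m := 0) hf (by norm_num)).continuous

theorem pdx_mul (hf : DifferentiableAt ℝ f p) (hg : DifferentiableAt ℝ g p) :
    pdx (fun q => f q * g q) p = pdx f p * g p + f p * pdx g p :=
  ((hasDerivAt_pdx hf).mul (hasDerivAt_pdx hg)).deriv

theorem pdy_mul (hf : DifferentiableAt ℝ f p) (hg : DifferentiableAt ℝ g p) :
    pdy (fun q => f q * g q) p = pdy f p * g p + f p * pdy g p :=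
  ((hasDerivAt_pdy hf).mul (hasDerivAt_pdy hg)).deriv

theorem pdx_conj (hf : DifferentiableAt ℝ f p) : pdx (fun q => conj (f q)) p = conj (pdx f p) :=
  (hasDerivAt_pdx hf).star.deriv

theorem pdy_conj (hf : DifferentiableAt ℝ f p) : pdy (fun q => conj (f q)) p = conj (pdy f p) :=
  (hasDerivAt_pdy hf).star.deriv

end PartialDerivatives

section Smoothness

variable {E : Type*} [NormedAddCommGroup E] [NormedSpace ℝ E] {n : WithTop ℕ∞}

@[fun_prop]
theorem ContDiff.ofReal {g : E → ℝ} (hg : ContDiff ℝ n g) : ContDiff ℝ n (fun x => (g x : ℂ)) :=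
  Complex.ofRealCLM.contDiff.comp hg

@[fun_prop]
theorem ContDiff.conj {g : E → ℂ} (hg : ContDiff ℝ n g) : ContDiff ℝ n (fun x => conj (g x)) :=
  Complex.conjCLE.contDiff.comp hg

@[fun_prop]
theorem contDiff_polarCoord_symm : ContDiff ℝ n polarCoord.symm := by
  rw [show (polarCoord.symm : ℝ × ℝ → ℝ × ℝ) = fun q => (q.1 * Real.cos q.2, q.1 * Real.sin q.2)
    from funext polarCoord_symm_apply]
  fun_prop

end Smoothness

section Polar

/- `r` times the radial component, resp. the angular component, of the field `(F₁, F₂)` at the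
point with polar coordinates `q = (r, θ)`. -/
def polarRadialFlux (F₁ F₂ : ℝ × ℝ → ℂ) (q : ℝ × ℝ) : ℂ :=
  q.1 * (Real.cos q.2 * F₁ (polarCoord.symm q) + Real.sin q.2 * F₂ (polarCoord.symm q))

def polarAngularFlux (F₁ F₂ : ℝ × ℝ → ℂ) (q : ℝ × ℝ) : ℂ :=
  -(Real.sin q.2 : ℂ) * F₁ (polarCoord.symm q) + Real.cos q.2 * F₂ (polarCoord.symm q)

variable {F₁ F₂ : ℝ × ℝ → ℂ}

theorem contDiff_polarRadialFlux {n : WithTop ℕ∞} (h₁ : ContDiff ℝ n F₁) (h₂ : ContDiff ℝ n F₂) :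
    ContDiff ℝ n (polarRadialFlux F₁ F₂) := by
  unfold polarRadialFlux; fun_prop

theorem contDiff_polarAngularFlux {n : WithTop ℕ∞} (h₁ : ContDiff ℝ n F₁) (h₂ : ContDiff ℝ n F₂) :
    ContDiff ℝ n (polarAngularFlux F₁ F₂) := by
  unfold polarAngularFlux; fun_prop

theorem hasDerivAt_polarCoord_symm_fst (r θ : ℝ) :
    HasDerivAt (fun t => polarCoord.symm (t, θ)) (Real.cos θ, Real.sin θ) r := by
  simp only [polarCoord_symm_apply]
  simpa using ((hasDerivAt_id r).mul_const (Real.cos θ)).prodMk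
    ((hasDerivAt_id r).mul_const (Real.sin θ))

theorem hasDerivAt_polarCoord_symm_snd (r θ : ℝ) :
    HasDerivAt (fun t => polarCoord.symm (r, t)) (-(r * Real.sin θ), r * Real.cos θ) θ := by
  simp only [polarCoord_symm_apply]
  simpa using ((Real.hasDerivAt_cos θ).const_mul r).prodMk ((Real.hasDerivAt_sin θ).const_mul r)

theorem pdx_polarRadialFlux_add_pdy_polarAngularFlux {q : ℝ × ℝ}
    (h₁ : DifferentiableAt ℝ F₁ (polarCoord.symm q))
    (h₂ : DifferentiableAt ℝ F₂ (polarCoord.symm q)) :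
    pdx (polarRadialFlux F₁ F₂) q + pdy (polarAngularFlux F₁ F₂) q
      = q.1 * (pdx F₁ (polarCoord.symm q) + pdy F₂ (polarCoord.symm q)) := by
  obtain ⟨r, θ⟩ := q
  have hr₁ := hasDerivAt_comp_curve (hasDerivAt_polarCoord_symm_fst r θ) h₁
  have hr₂ := hasDerivAt_comp_curve (hasDerivAt_polarCoord_symm_fst r θ) h₂
  have hθ₁ := hasDerivAt_comp_curve (hasDerivAt_polarCoord_symm_snd r θ) h₁
  have hθ₂ := hasDerivAt_comp_curve (hasDerivAt_polarCoord_symm_snd r θ) h₂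
  have hradial := (hasDerivAt_id r).ofReal_comp.mul
    ((hr₁.const_mul (Real.cos θ : ℂ)).add (hr₂.const_mul (Real.sin θ : ℂ)))
  have hangular := ((Real.hasDerivAt_sin θ).ofReal_comp.neg.mul hθ₁).add
    ((Real.hasDerivAt_cos θ).ofReal_comp.mul hθ₂)
  have hcs : (Real.cos θ : ℂ) ^ 2 + (Real.sin θ : ℂ) ^ 2 = 1 := by
    exact_mod_cast Real.cos_sq_add_sin_sq θ
  have e₁ : pdx (polarRadialFlux F₁ F₂) (r, θ) = _ := hradial.deriv
  have e₂ : pdy (polarAngularFlux F₁ F₂) (r, θ) = _ := hangular.deriv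
  simp only [Pi.add_apply, Pi.neg_apply, id, Complex.ofReal_one, Complex.ofReal_neg,
    Complex.ofReal_mul] at e₁ e₂
  rw [e₁, e₂]
  linear_combination
    (r * pdx F₁ (polarCoord.symm (r, θ)) + r * pdy F₂ (polarCoord.symm (r, θ))) * hcs

end Polar

section Integration

variable {E : Type*} [NormedAddCommGroup E]

theorem measurableSet_disk : MeasurableSet disk :=
  (isOpen_lt (by fun_prop) continuous_const).measurableSet

theorem disk_subset_Icc_prod_Icc : disk ⊆ Icc (-1) 1 ×ˢ Icc (-1) 1 := by
  rintro ⟨x, y⟩ (h : x ^ 2 + y ^ 2 < 1)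
  refine ⟨⟨?_, ?_⟩, ?_, ?_⟩ <;> nlinarith [sq_nonneg x, sq_nonneg y]

theorem Continuous.integrableOn_Icc_prod_Icc {f : ℝ × ℝ → E} (hf : Continuous f) {s : Set (ℝ × ℝ)}
    {a b c d : ℝ} (hs : s ⊆ Icc a b ×ˢ Icc c d) : IntegrableOn f s :=
  (hf.continuousOn.integrableOn_compact (isCompact_Icc.prod isCompact_Icc)).mono_set hs

theorem Continuous.integrableOn_disk {f : ℝ × ℝ → E} (hf : Continuous f) : IntegrableOn f disk :=
  hf.integrableOn_Icc_prod_Icc disk_subset_Icc_prod_Icc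

theorem integral_Ioo_pdx {G : ℝ × ℝ → ℂ} (hG : ContDiff ℝ 1 G) {a b : ℝ} (hab : a ≤ b) (y : ℝ) :
    ∫ x in Ioo a b, pdx G (x, y) = G (b, y) - G (a, y) := by
  rw [← integral_Ioc_eq_integral_Ioo, ← intervalIntegral.integral_of_le hab]
  exact intervalIntegral.integral_eq_sub_of_hasDerivAt (f := fun x => G (x, y))
    (fun x _ => hasDerivAt_pdx (p := (x, y)) (hG.differentiable one_ne_zero _))
    (((continuous_pdx hG).comp (continuous_id.prodMk continuous_const)).intervalIntegrable _ _)

theorem integral_Ioo_pdy {G : ℝ × ℝ → ℂ} (hG : ContDiff ℝ 1 G) (x : ℝ) {c d : ℝ} (hcd : c ≤ d) :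
    ∫ y in Ioo c d, pdy G (x, y) = G (x, d) - G (x, c) := by
  rw [← integral_Ioc_eq_integral_Ioo, ← intervalIntegral.integral_of_le hcd]
  exact intervalIntegral.integral_eq_sub_of_hasDerivAt (f := fun y => G (x, y))
    (fun y _ => hasDerivAt_pdy (p := (x, y)) (hG.differentiable one_ne_zero _))
    (((continuous_pdy hG).comp (continuous_const.prodMk continuous_id)).intervalIntegrable _ _)

theorem setIntegral_Ioo_prod_pdx {G : ℝ × ℝ → ℂ} (hG : ContDiff ℝ 1 G) {a b : ℝ} (hab : a ≤ b)
    (c d : ℝ) : ∫ q in Ioo a b ×ˢ Ioo c d, pdx G q = ∫ y in Ioo c d, (G (b, y) - G (a, y)) := by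
  have hi : IntegrableOn (pdx G) (Ioo a b ×ˢ Ioo c d) :=
    (continuous_pdx hG).integrableOn_Icc_prod_Icc
      (prod_mono Ioo_subset_Icc_self Ioo_subset_Icc_self)
  rw [Measure.volume_eq_prod, IntegrableOn, ← Measure.prod_restrict] at hi
  rw [Measure.volume_eq_prod, ← Measure.prod_restrict, integral_prod_symm _ hi]
  simp only [integral_Ioo_pdx hG hab]

theorem setIntegral_Ioo_prod_pdy {G : ℝ × ℝ → ℂ} (hG : ContDiff ℝ 1 G) (a b : ℝ) {c d : ℝ}
    (hcd : c ≤ d) : ∫ q in Ioo a b ×ˢ Ioo c d, pdy G q = ∫ x in Ioo a b, (G (x, d) - G (x, c)) := by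
  have hi : IntegrableOn (pdy G) (Ioo a b ×ˢ Ioo c d) :=
    (continuous_pdy hG).integrableOn_Icc_prod_Icc
      (prod_mono Ioo_subset_Icc_self Ioo_subset_Icc_self)
  rw [Measure.volume_eq_prod] at hi ⊢
  rw [setIntegral_prod _ hi]
  simp only [integral_Ioo_pdy hG _ hcd]

theorem setIntegral_disk_eq_polar [NormedSpace ℝ E] (f : ℝ × ℝ → E) :
    ∫ p in disk, f p = ∫ q in Ioo (0 : ℝ) 1 ×ˢ Ioo (-π) π, q.1 • f (polarCoord.symm q) := by
  have hmeas : MeasurableSet (polarCoord.symm ⁻¹' disk) :=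
    measurableSet_disk.preimage (contDiff_polarCoord_symm (n := 0)).continuous.measurable
  have htarget : polarCoord.target ∩ polarCoord.symm ⁻¹' disk = Ioo (0 : ℝ) 1 ×ˢ Ioo (-π) π := by
    ext ⟨r, θ⟩
    simp only [polarCoord_target, polarCoord_symm_apply, disk, mem_inter_iff, mem_prod, mem_Ioi,
      mem_Ioo, mem_preimage, mem_ofPred_eq, mul_pow, ← mul_add, Real.cos_sq_add_sin_sq, mul_one]
    constructor
    · rintro ⟨⟨hr, hθ⟩, h⟩
      exact ⟨⟨hr, by nlinarith⟩, hθ⟩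
    · rintro ⟨⟨hr, hr'⟩, hθ⟩
      exact ⟨⟨hr, hθ⟩, by nlinarith⟩
  rw [← integral_indicator measurableSet_disk, ← integral_comp_polarCoord_symm, ← htarget,
    ← setIntegral_indicator hmeas]
  refine setIntegral_congr_fun polarCoord.open_target.measurableSet fun q _ => ?_
  by_cases h : polarCoord.symm q ∈ disk
  · rw [indicator_of_mem h, indicator_of_mem (mem_preimage.2 h)]
  · rw [indicator_of_notMem h, indicator_of_notMem (mt mem_preimage.1 h), smul_zero]

end Integration

theorem integral_disk_pdx_add_pdy_eq_zero {F₁ F₂ : ℝ × ℝ → ℂ} (h₁ : ContDiff ℝ 1 F₁)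
    (h₂ : ContDiff ℝ 1 F₂) (hb : ∀ p ∈ bdry, (p.1 : ℂ) * F₁ p + p.2 * F₂ p = 0) :
    ∫ p in disk, (pdx F₁ p + pdy F₂ p) = 0 := by
  set G := polarRadialFlux F₁ F₂
  set H := polarAngularFlux F₁ F₂
  have hG : ContDiff ℝ 1 G := contDiff_polarRadialFlux h₁ h₂
  have hH : ContDiff ℝ 1 H := contDiff_polarAngularFlux h₁ h₂
  have hrect : Ioo (0 : ℝ) 1 ×ˢ Ioo (-π) π ⊆ Icc 0 1 ×ˢ Icc (-π) π :=
    prod_mono Ioo_subset_Icc_self Ioo_subset_Icc_self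
  have hG_bdry (θ : ℝ) : G (1, θ) - G (0, θ) = 0 := by
    have := hb (Real.cos θ, Real.sin θ) (Real.cos_sq_add_sin_sq θ)
    simpa [G, polarRadialFlux] using this
  have hH_periodic (r : ℝ) : H (r, π) - H (r, -π) = 0 := by
    simp [H, polarAngularFlux]
  calc ∫ p in disk, (pdx F₁ p + pdy F₂ p)
      = ∫ q in Ioo (0 : ℝ) 1 ×ˢ Ioo (-π) π, (pdx G q + pdy H q) := by
        rw [setIntegral_disk_eq_polar]
        refine setIntegral_congr_fun (measurableSet_Ioo.prod measurableSet_Ioo) fun q _ => ?_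
        rw [Complex.real_smul]
        exact (pdx_polarRadialFlux_add_pdy_polarAngularFlux
          (h₁.differentiable one_ne_zero _) (h₂.differentiable one_ne_zero _)).symm
    _ = (∫ q in Ioo (0 : ℝ) 1 ×ˢ Ioo (-π) π, pdx G q)
          + ∫ q in Ioo (0 : ℝ) 1 ×ˢ Ioo (-π) π, pdy H q :=
        integral_add ((continuous_pdx hG).integrableOn_Icc_prod_Icc hrect)
          ((continuous_pdy hH).integrableOn_Icc_prod_Icc hrect)
    _ = 0 := by
        rw [setIntegral_Ioo_prod_pdx hG zero_le_one, setIntegral_Ioo_prod_pdy hH _ _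
          (neg_le_self Real.pi_pos.le)]
        simp [hG_bdry, hH_periodic]

theorem continuous_lap {w : ℝ × ℝ → ℂ} (hw : ContDiff ℝ 2 w) : Continuous (lap w) :=
  (continuous_pdx (contDiff_pdx hw (by norm_num))).add
    (continuous_pdy (contDiff_pdy hw (by norm_num)))

theorem ofReal_nsq (f : ℝ × ℝ → ℂ) : (nsq f : ℂ) = ∫ p in disk, f p * conj (f p) := by
  rw [nsq, ← integral_complex_ofReal]
  simp_rw [RCLike.mul_conj]
  push_cast
  rfl

theorem integral_disk_mul_conj_lap {w : ℝ × ℝ → ℂ} (hw : ContDiff ℝ 2 w)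
    (hbc : ∀ p ∈ bdry, w p = 0) : ∫ p in disk, w p * conj (lap w p) = -gradNsq w := by
  have hwx : ContDiff ℝ 1 (pdx w) := contDiff_pdx hw (by norm_num)
  have hwy : ContDiff ℝ 1 (pdy w) := contDiff_pdy hw (by norm_num)
  have hw₁ : ContDiff ℝ 1 w := hw.of_le (by norm_num)
  have hdiv := integral_disk_pdx_add_pdy_eq_zero (hw₁.mul hwx.conj) (hw₁.mul hwy.conj)
    fun p hp => by simp [hbc p hp]
  have hdiv_eq (p : ℝ × ℝ) :
      pdx (fun q => w q * conj (pdx w q)) p + pdy (fun q => w q * conj (pdy w q)) p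
        = w p * conj (lap w p) + (pdx w p * conj (pdx w p) + pdy w p * conj (pdy w p)) := by
    have hd := hw.differentiable two_ne_zero p
    rw [pdx_mul hd ((hwx.conj).differentiable one_ne_zero p), pdy_mul hd
      ((hwy.conj).differentiable one_ne_zero p), pdx_conj (hwx.differentiable one_ne_zero p),
      pdy_conj (hwy.differentiable one_ne_zero p), lap, map_add]
    ring
  have hlap := continuous_lap hw
  have hx := continuous_pdx hw₁
  have hy := continuous_pdy hw₁
  simp_rw [hdiv_eq] at hdiv
  rw [integral_add (Continuous.integrableOn_disk (by fun_prop))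
    (Continuous.integrableOn_disk (by fun_prop))] at hdiv
  rw [gradNsq, Complex.ofReal_add, ofReal_nsq, ofReal_nsq, ← integral_add
    (Continuous.integrableOn_disk (by fun_prop)) (Continuous.integrableOn_disk (by fun_prop))]
  linear_combination hdiv

theorem first_energy_identity_general (ε R : ℝ) (β : ℂ)
    (w ψ : ℝ × ℝ → ℂ) (hw : ContDiff ℝ (⊤ : ℕ∞) w)
    (hbc : ∀ p ∈ bdry, w p = 0)
    (heq : ∀ p ∈ disk,
      (1 / (R : ℂ)) * lap w p + (R : ℂ) * azim ψ p = β * (w p - (ε : ℂ) * lap w p)) :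
    (1 / (R : ℂ) + β * (ε : ℂ)) * (nsq (lap w) : ℂ) + (R : ℂ) * ip (azim ψ) (lap w)
      = -β * (gradNsq w : ℂ) := by
  have hw₂ : ContDiff ℝ 2 w := contDiff_infty.1 hw 2
  have hlap := continuous_lap hw₂
  have hwΔ : IntegrableOn (fun p => w p * conj (lap w p)) disk :=
    Continuous.integrableOn_disk (by fun_prop)
  have hΔΔ : IntegrableOn (fun p => lap w p * conj (lap w p)) disk :=
    Continuous.integrableOn_disk (by fun_prop)
  have hazim : (R : ℂ) * ip (azim ψ) (lap w) = β * (∫ p in disk, w p * conj (lap w p))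
      - (1 / (R : ℂ) + β * ε) * ∫ p in disk, lap w p * conj (lap w p) := by
    rw [ip, ← integral_const_mul, ← integral_const_mul, ← integral_const_mul,
      ← integral_sub (hwΔ.const_mul _) (hΔΔ.const_mul _)]
    exact setIntegral_congr_fun measurableSet_disk fun p hp => by
      linear_combination conj (lap w p) * heq p hp
  rw [hazim, ofReal_nsq, integral_disk_mul_conj_lap hw₂ hbc]
  ring

/-- The first integration-by-parts identity in the proof of Lemma 3.1:
`(1/R + βε)‖Δw‖² + R⟨ψ_θ, Δw⟩ = −β‖∇w‖²`. -/
theorem first_energy_identity (ε R : ℝ) (hε : 0 ≤ ε) (hR : 0 < R) (β : ℂ)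
    (w ψ : ℝ × ℝ → ℂ) (hw : ContDiff ℝ (⊤ : ℕ∞) w) (hψ : ContDiff ℝ (⊤ : ℕ∞) ψ)
    (hbc : ∀ p ∈ bdry, w p = 0)
    (heq : ∀ p ∈ disk,
      (1 / (R : ℂ)) * lap w p + (R : ℂ) * azim ψ p = β * (w p - (ε : ℂ) * lap w p)) :
    (1 / (R : ℂ) + β * (ε : ℂ)) * (nsq (lap w) : ℂ) + (R : ℂ) * ip (azim ψ) (lap w)
      = -β * (gradNsq w : ℂ) :=
  first_energy_identity_general ε R β w ψ hw hbc heq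
end
end

section
/- Let ε ≥ 0, R > 0, and let α > 0 be a real number with J_1(α) = 0. Set β = −α² / (R·(1 + ε·α²)) and define ψ : (0,1] → ℝ by ψ(r) = J_0(α·r) − J_0(α). Then −(1/R + β·ε)·Δ_0(Δ_0 ψ)(r) = −β·(Δ_0 ψ)(r) for all r ∈ (0,1), and ψ(1) = 0 and ψ'(1) = 0, where Δ_0 u(r) = u''(r) + u'(r)/r. In other words, (w, ψ) = (0, J_0(α·) − J_0(α)) is an eigensolution of the separated eigenvalue problem with azimuthal wavenumber m = 0 and eigenvalue β. -/
/-! Write `J_m(x) = (x/2)^m g_m((x/2)^2)` with the entire series `g_m = besselSeries m`.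
Comparing coefficients gives `g_m' = -g_{m+1}` and `g_m - (m+1) g_{m+1} = -y g_{m+2}`, hence
`J_0' = -J_1` and `(x^{m+1} J_{m+1})' = x^{m+1} J_m`. For `φ = J_0(α·)` this yields
`Δ₀φ = (rφ')'/r = -α²φ`. As `Δ₀` is local and kills constants, `Δ₀ψ = -α²φ` and `Δ₀²ψ = α⁴φ`
on `r > 0`, so the equation reduces to `β(1 + εα²) = -α²/R`. Finally `ψ'(1) = -αJ_1(α) = 0`. -/

noncomputable section

/-- The (real) Bessel function of the first kind of integer order m ≥ 0,
`J_m(x) = Σ_{k≥0} (−1)^k/(k!(k+m)!) (x/2)^{2k+m}`. -/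
def besselJr (m : ℕ) (x : ℝ) : ℝ :=
  ∑' k : ℕ, ((-1 : ℝ) ^ k / ((Nat.factorial k : ℝ) * (Nat.factorial (k + m) : ℝ)))
    * (x / 2) ^ (2 * k + m)

/-- The radial Laplacian for azimuthal wavenumber 0: `Δ₀u = u'' + u'/r`. -/
def lap0 (u : ℝ → ℝ) : ℝ → ℝ := fun r => deriv (deriv u) r + deriv u r / r

open scoped Nat

section PowerSeries

variable {c : ℕ → ℝ}

theorem summable_mul_pow_of_abs_le_inv_factorial (hc : ∀ k, |c k| ≤ 1 / k !) (y : ℝ) :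
    Summable fun k => c k * y ^ k := by
  refine .of_norm_bounded (Real.summable_pow_div_factorial |y|) fun k => ?_
  rw [Real.norm_eq_abs, abs_mul, abs_pow, div_eq_inv_mul, ← one_div]
  exact mul_le_mul_of_nonneg_right (hc k) (by positivity)

theorem hasDerivAt_tsum_mul_pow_of_abs_le_inv_factorial (hc : ∀ k, |c k| ≤ 1 / k !) (y : ℝ) :
    HasDerivAt (fun z => ∑' k, c k * z ^ k) (∑' k, (k + 1) * c (k + 1) * y ^ k) y := by
  set M := |y| + 1
  have hcoeff : ∀ k : ℕ, |(k + 1 : ℝ) * c (k + 1)| ≤ 1 / k ! := fun k => by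
    calc |(k + 1 : ℝ) * c (k + 1)| = (k + 1) * |c (k + 1)| := by
          rw [abs_mul, abs_of_pos (by positivity)]
      _ ≤ (k + 1) * (1 / (k + 1)!) := by gcongr; exact hc (k + 1)
      _ = 1 / k ! := by rw [Nat.factorial_succ]; push_cast; field_simp
  have hbound : ∀ (k : ℕ) (z : ℝ), z ∈ Metric.ball (0 : ℝ) M →
      ‖(k + 1 : ℝ) * c (k + 1) * z ^ k‖ ≤ M ^ k / k ! := fun k z hz => by
    have hzM : |z| ≤ M := (mem_ball_zero_iff.mp hz).le
    rw [Real.norm_eq_abs, abs_mul, abs_pow, div_eq_inv_mul, ← one_div]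
    exact mul_le_mul (hcoeff k) (pow_le_pow_left₀ (abs_nonneg z) hzM k) (by positivity)
      (by positivity)
  have hterm : ∀ (k : ℕ) (z : ℝ), z ∈ Metric.ball (0 : ℝ) M →
      HasDerivAt (fun z => c (k + 1) * z ^ (k + 1)) ((k + 1 : ℝ) * c (k + 1) * z ^ k) z :=
    fun k z _ => by
      refine ((hasDerivAt_pow (k + 1) z).const_mul (c (k + 1))).congr_deriv ?_
      rw [Nat.add_sub_cancel]; push_cast; ring
  have hy : y ∈ Metric.ball (0 : ℝ) M := mem_ball_zero_iff.mpr (lt_add_one _)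
  have hsucc : Summable fun k => c (k + 1) * y ^ (k + 1) :=
    (summable_nat_add_iff 1).mpr (summable_mul_pow_of_abs_le_inv_factorial hc y)
  have htail := hasDerivAt_tsum_of_isPreconnected (Real.summable_pow_div_factorial M)
    Metric.isOpen_ball (convex_ball 0 M).isPreconnected hterm hbound hy hsucc hy
  refine (htail.const_add (c 0)).congr_of_eventuallyEq (.of_eq (funext fun z => ?_))
  rw [(summable_mul_pow_of_abs_le_inv_factorial hc z).tsum_eq_zero_add, pow_zero, mul_one]

end PowerSeries

def besselCoeff (m k : ℕ) : ℝ := (-1) ^ k / ((k ! : ℝ) * ((k + m)! : ℝ))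

def besselSeries (m : ℕ) (y : ℝ) : ℝ := ∑' k, besselCoeff m k * y ^ k

theorem abs_besselCoeff_le (m k : ℕ) : |besselCoeff m k| ≤ 1 / k ! := by
  have hm : (1 : ℝ) ≤ (k + m)! := by exact_mod_cast (k + m).factorial_pos
  rw [besselCoeff, abs_div, abs_pow, abs_neg, abs_one, one_pow, abs_of_pos (by positivity)]
  exact one_div_le_one_div_of_le (by positivity) (le_mul_of_one_le_right (by positivity) hm)

theorem succ_mul_besselCoeff_succ (m k : ℕ) :
    (k + 1 : ℝ) * besselCoeff m (k + 1) = -besselCoeff (m + 1) k := by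
  rw [besselCoeff, besselCoeff, show k + 1 + m = k + (m + 1) by omega, Nat.factorial_succ k]
  push_cast
  field_simp
  ring

theorem add_succ_mul_besselCoeff (m k : ℕ) :
    (m + k + 1 : ℝ) * besselCoeff (m + 1) k = besselCoeff m k := by
  rw [besselCoeff, besselCoeff, show k + (m + 1) = (k + m) + 1 by omega, Nat.factorial_succ (k + m)]
  push_cast
  field_simp
  ring

theorem summable_besselSeries (m : ℕ) (y : ℝ) : Summable fun k => besselCoeff m k * y ^ k :=
  summable_mul_pow_of_abs_le_inv_factorial (abs_besselCoeff_le m) y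

theorem hasDerivAt_besselSeries (m : ℕ) (y : ℝ) :
    HasDerivAt (besselSeries m) (-besselSeries (m + 1) y) y := by
  refine (hasDerivAt_tsum_mul_pow_of_abs_le_inv_factorial (abs_besselCoeff_le m) y).congr_deriv ?_
  simp only [besselSeries, succ_mul_besselCoeff_succ, neg_mul, tsum_neg]

theorem besselSeries_sub_succ_mul (m : ℕ) (y : ℝ) :
    besselSeries m y - (m + 1) * besselSeries (m + 1) y = -(y * besselSeries (m + 2) y) := by
  have hcoeff : ∀ k, besselCoeff m k * y ^ k - (m + 1) * (besselCoeff (m + 1) k * y ^ k)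
      = k * besselCoeff (m + 1) k * y ^ k := fun k => by
    rw [← add_succ_mul_besselCoeff]; ring
  have hsum : Summable fun k => k * besselCoeff (m + 1) k * y ^ k :=
    ((summable_besselSeries m y).sub
      ((summable_besselSeries (m + 1) y).mul_left (m + 1 : ℝ))).congr hcoeff
  calc besselSeries m y - (m + 1) * besselSeries (m + 1) y
      = ∑' k, k * besselCoeff (m + 1) k * y ^ k := by
        rw [besselSeries, besselSeries, ← tsum_mul_left,
          ← (summable_besselSeries m y).tsum_sub ((summable_besselSeries (m + 1) y).mul_left _)]
        exact tsum_congr hcoeff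
    _ = ∑' k : ℕ, ((k : ℝ) + 1) * besselCoeff (m + 1) (k + 1) * y ^ (k + 1) := by
        rw [hsum.tsum_eq_zero_add]; simp
    _ = -(y * besselSeries (m + 2) y) := by
        rw [besselSeries, ← tsum_mul_left, ← tsum_neg]
        refine tsum_congr fun k => ?_
        rw [succ_mul_besselCoeff_succ]; ring

theorem hasDerivAt_pow_mul_besselSeries (m : ℕ) (y : ℝ) :
    HasDerivAt (fun y => y ^ (m + 1) * besselSeries (m + 1) y) (y ^ m * besselSeries m y) y := by
  refine ((hasDerivAt_pow (m + 1) y).mul (hasDerivAt_besselSeries (m + 1) y)).congr_deriv ?_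
  rw [Nat.add_sub_cancel]
  push_cast
  linear_combination (-y ^ m) * besselSeries_sub_succ_mul m y

theorem besselJr_eq_besselSeries (m : ℕ) (x : ℝ) :
    besselJr m x = (x / 2) ^ m * besselSeries m ((x / 2) ^ 2) := by
  rw [besselSeries, ← tsum_mul_left]
  refine tsum_congr fun k => ?_
  rw [besselCoeff, pow_add, pow_mul]
  ring

theorem hasDerivAt_half_sq (x : ℝ) : HasDerivAt (fun x : ℝ => (x / 2) ^ 2) (x / 2) x := by
  refine (((hasDerivAt_id x).div_const 2).pow 2).congr_deriv ?_
  simp only [id]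
  ring

theorem differentiable_besselJr (m : ℕ) : Differentiable ℝ (besselJr m) := by
  have hg : Differentiable ℝ (besselSeries m) := fun y =>
    (hasDerivAt_besselSeries m y).differentiableAt
  rw [funext (besselJr_eq_besselSeries m)]
  fun_prop

theorem hasDerivAt_besselJr_zero (x : ℝ) : HasDerivAt (besselJr 0) (-besselJr 1 x) x := by
  have hJ : besselJr 0 = besselSeries 0 ∘ fun x => (x / 2) ^ 2 :=
    funext fun x => by rw [besselJr_eq_besselSeries, pow_zero, one_mul, Function.comp_apply]
  rw [hJ, besselJr_eq_besselSeries]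
  refine ((hasDerivAt_besselSeries 0 _).comp x (hasDerivAt_half_sq x)).congr_deriv ?_
  ring

theorem hasDerivAt_pow_mul_besselJr_succ (m : ℕ) (x : ℝ) :
    HasDerivAt (fun x => x ^ (m + 1) * besselJr (m + 1) x) (x ^ (m + 1) * besselJr m x) x := by
  have hf : (fun x => x ^ (m + 1) * besselJr (m + 1) x) = fun x =>
      2 ^ (m + 1) * ((fun y => y ^ (m + 1) * besselSeries (m + 1) y) ∘ fun x => (x / 2) ^ 2) x :=
    funext fun x => by
      obtain ⟨t, rfl⟩ : ∃ t, x = 2 * t := ⟨x / 2, by ring⟩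
      rw [besselJr_eq_besselSeries, Function.comp_apply, mul_div_cancel_left₀ t two_ne_zero]
      ring
  rw [hf]
  refine (((hasDerivAt_pow_mul_besselSeries m _).comp x
    (hasDerivAt_half_sq x)).const_mul (2 ^ (m + 1))).congr_deriv ?_
  obtain ⟨t, rfl⟩ : ∃ t, x = 2 * t := ⟨x / 2, by ring⟩
  rw [besselJr_eq_besselSeries, mul_div_cancel_left₀ t two_ne_zero]
  ring

theorem lap0_eq_deriv_mul_deriv_div {u : ℝ → ℝ} {r : ℝ} (hr : r ≠ 0)
    (hu : DifferentiableAt ℝ (deriv u) r) :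
    lap0 u r = deriv (fun s => s * deriv u s) r / r := by
  rw [lap0, deriv_fun_mul differentiableAt_fun_id hu, deriv_id'']
  field_simp
  ring

theorem lap0_congr_of_eventuallyEq {u v : ℝ → ℝ} {r : ℝ} (h : u =ᶠ[nhds r] v) :
    lap0 u r = lap0 v r := by
  rw [lap0, lap0, h.deriv.deriv_eq, h.deriv_eq]

theorem lap0_const_mul (a : ℝ) (u : ℝ → ℝ) (r : ℝ) :
    lap0 (fun s => a * u s) r = a * lap0 u r := by
  rw [lap0, lap0, deriv_const_mul_field', deriv_const_mul_field']
  ring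

theorem lap0_sub_const (u : ℝ → ℝ) (a r : ℝ) : lap0 (fun s => u s - a) r = lap0 u r := by
  have h : deriv (fun s => u s - a) = deriv u := funext fun r => deriv_sub_const a
  rw [lap0, lap0, h]

theorem hasDerivAt_besselJr_zero_comp_mul (α r : ℝ) :
    HasDerivAt (fun s => besselJr 0 (α * s)) (-α * besselJr 1 (α * r)) r :=
  ((hasDerivAt_besselJr_zero (α * r)).comp r (hasDerivAt_const_mul α)).congr_deriv (by ring)

theorem lap0_besselJr_zero_comp_mul (α : ℝ) {r : ℝ} (hr : r ≠ 0) :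
    lap0 (fun s => besselJr 0 (α * s)) r = -α ^ 2 * besselJr 0 (α * r) := by
  have hderiv : deriv (fun s => besselJr 0 (α * s)) = fun s => -α * besselJr 1 (α * s) :=
    funext fun s => (hasDerivAt_besselJr_zero_comp_mul α s).deriv
  have hdiff : DifferentiableAt ℝ (fun s => -α * besselJr 1 (α * s)) r :=
    ((differentiable_besselJr 1).comp (differentiable_id.const_mul α)).const_mul (-α) r
  have hflux : HasDerivAt (fun s => s * (-α * besselJr 1 (α * s)))
      (-(α ^ 2 * r * besselJr 0 (α * r))) r :=
    ((hasDerivAt_pow_mul_besselJr_succ 0 (α * r)).comp r (hasDerivAt_const_mul α)).neg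
      |>.congr_of_eventuallyEq
        (.of_eq (funext fun s => by simp only [Function.comp_def, Pi.neg_apply]; ring))
      |>.congr_deriv (by ring)
  rw [lap0_eq_deriv_mul_deriv_div hr (hderiv ▸ hdiff), hderiv, hflux.deriv]
  field_simp

theorem m_zero_second_eigenmodes_general (ε R α : ℝ) (hε : 0 ≤ ε)
    (hroot : besselJr 1 α = 0) (β : ℝ) (hβ : β = -α ^ 2 / (R * (1 + ε * α ^ 2)))
    (ψ : ℝ → ℝ) (hψ : ψ = fun r => besselJr 0 (α * r) - besselJr 0 α) :
    (∀ r ∈ Set.Ioo (0 : ℝ) 1,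
      -(1 / R + β * ε) * lap0 (lap0 ψ) r = -β * lap0 ψ r)
    ∧ ψ 1 = 0 ∧ deriv ψ 1 = 0 := by
  have hlap : ∀ r, 0 < r → lap0 ψ r = -α ^ 2 * besselJr 0 (α * r) := fun r hr => by
    rw [hψ, lap0_sub_const, lap0_besselJr_zero_comp_mul α hr.ne']
  have hlap2 : ∀ r, 0 < r → lap0 (lap0 ψ) r = α ^ 4 * besselJr 0 (α * r) := fun r hr => by
    rw [lap0_congr_of_eventuallyEq (Filter.eventuallyEq_of_mem (Ioi_mem_nhds hr) hlap),
      lap0_const_mul, lap0_besselJr_zero_comp_mul α hr.ne']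
    ring
  have hβD : β * (1 + ε * α ^ 2) = -α ^ 2 / R := by
    rw [hβ, div_mul_eq_mul_div, mul_div_mul_right _ _ (by positivity)]
  refine ⟨fun r hr => ?_, by simp [hψ], ?_⟩
  · rw [hlap2 r hr.1, hlap r hr.1]
    linear_combination (-α ^ 2 * besselJr 0 (α * r)) * hβD
  · rw [hψ, deriv_sub_const, (hasDerivAt_besselJr_zero_comp_mul α 1).deriv, mul_one, hroot,
      mul_zero]

/-- The second family of m = 0 eigenmodes: if α is a zero of J₁ then
`ψ(r) = J₀(αr) − J₀(α)` solves `−(1/R + βε)Δ₀²ψ = −βΔ₀ψ` with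
`ψ(1) = ψ'(1) = 0`, where `β = −α²/(R(1+εα²))`. -/
theorem m_zero_second_eigenmodes (ε R α : ℝ) (hε : 0 ≤ ε) (hR : 0 < R) (hα : 0 < α)
    (hroot : besselJr 1 α = 0) (β : ℝ) (hβ : β = -α ^ 2 / (R * (1 + ε * α ^ 2)))
    (ψ : ℝ → ℝ) (hψ : ψ = fun r => besselJr 0 (α * r) - besselJr 0 α) :
    (∀ r ∈ Set.Ioo (0 : ℝ) 1,
      -(1 / R + β * ε) * lap0 (lap0 ψ) r = -β * lap0 ψ r)
    ∧ ψ 1 = 0 ∧ deriv ψ 1 = 0 :=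
  m_zero_second_eigenmodes_general ε R α hε hroot β hβ ψ hψ
end
end
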